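/- arXiv:2501.05291 — 2 statements merged into one kernel-verified Lean document; each statement's English description precedes it below -/
import Mathlib

section
/- For r ≥ 3, if G is a K_{1,r}-free graph, then α(G) ≤ (r-1)·γ(G). -/
/-!
Cover an independent set `S` by the closed neighbourhoods of the vertices of a dominating set
`D`. A vertex `d ∈ D` lying in `S` has no other vertex of `S` in its closed neighbourhood; a
vertex `d ∉ S` sees its part of `S` as pairwise nonadjacent neighbours, so there are at most
`r - 1` of them by `K_{1,r}`-freeness. Hence `|S| ≤ (r - 1) |D|`.
-/

open Finset

variable {V : Type*}

/-- A finset is independent in `G` : no two of its vertices are adjacent. -/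
def IsIndepFinset (G : SimpleGraph V) (S : Finset V) : Prop :=
  ∀ u ∈ S, ∀ v ∈ S, ¬ G.Adj u v

/-- A finset dominates `G` : every vertex outside it has a neighbour inside it. -/
def IsDomFinset (G : SimpleGraph V) (D : Finset V) : Prop :=
  ∀ v, v ∉ D → ∃ u ∈ D, G.Adj u v

/-- The independence number of `G`. -/
noncomputable def indepNum [Fintype V] (G : SimpleGraph V) : ℕ :=
  sSup {n | ∃ S : Finset V, IsIndepFinset G S ∧ S.card = n}

/-- The domination number of `G`. -/
noncomputable def domNum [Fintype V] (G : SimpleGraph V) : ℕ :=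
  sInf {n | ∃ D : Finset V, IsDomFinset G D ∧ D.card = n}

/-- `G` is `K_{1,r}`-free: no vertex has `r` pairwise nonadjacent neighbours. -/
def K1rFree (G : SimpleGraph V) (r : ℕ) : Prop :=
  ¬ ∃ (v : V) (A : Finset V), (∀ a ∈ A, G.Adj v a) ∧
      (∀ a ∈ A, ∀ b ∈ A, a ≠ b → ¬ G.Adj a b) ∧ A.card = r

section Counting

variable {G : SimpleGraph V} {r : ℕ} {S : Finset V}

noncomputable def closedNbhdIn (G : SimpleGraph V) (S : Finset V) (d : V) : Finset V :=
  open Classical in S.filter fun s => s = d ∨ G.Adj d s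

theorem mem_closedNbhdIn {d s : V} :
    s ∈ closedNbhdIn G S d ↔ s ∈ S ∧ (s = d ∨ G.Adj d s) := by
  classical
  simp only [closedNbhdIn, mem_filter]

theorem K1rFree.card_lt_of_subset (hG : K1rFree G r) (hS : IsIndepFinset G S) {v : V}
    {A : Finset V} (hAS : A ⊆ S) (hA : ∀ a ∈ A, G.Adj v a) : A.card < r := by
  by_contra! hle
  obtain ⟨B, hBA, hBcard⟩ := exists_subset_card_eq hle
  exact hG ⟨v, B, fun b hb => hA b (hBA hb),
    fun a ha b hb _ => hS a (hAS (hBA ha)) b (hAS (hBA hb)), hBcard⟩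

theorem IsIndepFinset.closedNbhdIn_subset_singleton (hS : IsIndepFinset G S) {d : V}
    (hd : d ∈ S) : closedNbhdIn G S d ⊆ {d} := by
  intro s hs
  obtain ⟨hsS, rfl | hadj⟩ := mem_closedNbhdIn.mp hs
  · exact mem_singleton_self s
  · exact absurd hadj (hS d hd s hsS)

theorem K1rFree.card_closedNbhdIn_le (hr : 2 ≤ r) (hG : K1rFree G r) (hS : IsIndepFinset G S)
    (d : V) : (closedNbhdIn G S d).card ≤ r - 1 := by
  by_cases hd : d ∈ S
  · have := card_le_card (hS.closedNbhdIn_subset_singleton hd)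
    rw [card_singleton] at this
    omega
  · have hadj : ∀ s ∈ closedNbhdIn G S d, G.Adj d s := by
      intro s hs
      obtain ⟨hsS, rfl | hadj⟩ := mem_closedNbhdIn.mp hs
      · exact absurd hsS hd
      · exact hadj
    have := hG.card_lt_of_subset hS (fun s hs => (mem_closedNbhdIn.mp hs).1) hadj
    omega

theorem IsDomFinset.subset_biUnion_closedNbhdIn [DecidableEq V] {D : Finset V}
    (hD : IsDomFinset G D) (S : Finset V) : S ⊆ D.biUnion (closedNbhdIn G S) := by
  intro s hs
  rw [mem_biUnion]
  by_cases hsD : s ∈ D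
  · exact ⟨s, hsD, mem_closedNbhdIn.mpr ⟨hs, Or.inl rfl⟩⟩
  · obtain ⟨d, hd, hadj⟩ := hD s hsD
    exact ⟨d, hd, mem_closedNbhdIn.mpr ⟨hs, Or.inr hadj⟩⟩

theorem K1rFree.card_le_mul_card (hr : 2 ≤ r) (hG : K1rFree G r) (hS : IsIndepFinset G S)
    {D : Finset V} (hD : IsDomFinset G D) : S.card ≤ (r - 1) * D.card := by
  classical
  calc S.card ≤ (D.biUnion (closedNbhdIn G S)).card :=
        card_le_card (hD.subset_biUnion_closedNbhdIn S)
    _ ≤ ∑ d ∈ D, (closedNbhdIn G S d).card := card_biUnion_le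
    _ ≤ ∑ _d ∈ D, (r - 1) := sum_le_sum fun d _ => hG.card_closedNbhdIn_le hr hS d
    _ = (r - 1) * D.card := by rw [sum_const, smul_eq_mul, mul_comm]

end Counting

section Invariants

variable [Fintype V] (G : SimpleGraph V)

theorem indepNum_le {m : ℕ} (h : ∀ S : Finset V, IsIndepFinset G S → S.card ≤ m) :
    indepNum G ≤ m := by
  refine csSup_le ⟨0, ∅, fun u hu => absurd hu (notMem_empty u), rfl⟩ ?_
  rintro n ⟨S, hS, rfl⟩
  exact h S hS

theorem exists_isDomFinset_card_eq_domNum :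
    ∃ D : Finset V, IsDomFinset G D ∧ D.card = domNum G :=
  Nat.sInf_mem (s := {n | ∃ D : Finset V, IsDomFinset G D ∧ D.card = n})
    ⟨_, univ, fun v hv => absurd (mem_univ v) hv, rfl⟩

end Invariants

/-- For r ≥ 3, K_{1,r}-free graphs satisfy α(G) ≤ (r-1)·γ(G). -/
theorem stmt1 [Fintype V] (G : SimpleGraph V) (r : ℕ) (hr : 3 ≤ r)
    (hG : K1rFree G r) :
    indepNum G ≤ (r - 1) * domNum G := by
  obtain ⟨D, hD, hDcard⟩ := exists_isDomFinset_card_eq_domNum G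
  rw [← hDcard]
  exact indepNum_le G fun S hS => hG.card_le_mul_card (by omega) hS hD
end

section
/- For k ≥ 0 and r ≥ 3, if G is a K_{1,r}-free graph of order n with minimum degree δ ≥ k+1, then the k-independence number satisfies α_k(G)·(δ - k + (r-1)(k+1)) ≤ (r-1)(k+1)·n. -/
open Finset

variable {V : Type*}

/-- S is a k-independent set: the subgraph induced by S has maximum degree ≤ k. -/
def IsKIndepFinset (G : SimpleGraph V) [DecidableRel G.Adj] (k : ℕ) (S : Finset V) : Prop :=
  ∀ v ∈ S, (S.filter (fun u => G.Adj v u)).card ≤ k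

/-- The k-independence number of G. -/
noncomputable def kIndepNum [Fintype V] (G : SimpleGraph V) [DecidableRel G.Adj] (k : ℕ) : ℕ :=
  sSup {n | ∃ S : Finset V, IsKIndepFinset G k S ∧ S.card = n}

/-!
A maximum `k`-independent set `S` sends at least `δ - k` edges from each of its vertices to its
complement. Conversely, a vertex `u` sees at most `(r - 1)(k + 1)` vertices of `S`: greedily,
the neighbours of `u` in `S` contain an independent set of at least a `1/(k + 1)` fraction of
them, and `K_{1,r}`-freeness caps its size at `r - 1`. Double counting the edges between `S`
and its complement gives `|S|(δ - k) ≤ (n - |S|)(r - 1)(k + 1)`.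
-/

open SimpleGraph

section

variable {G : SimpleGraph V}

lemma IsIndepFinset.insert [DecidableEq V] {A : Finset V} {x : V} (hA : IsIndepFinset G A)
    (hx : ∀ a ∈ A, ¬ G.Adj x a) : IsIndepFinset G (insert x A) := by
  intro u hu v hv
  rcases mem_insert.1 hu with rfl | huA <;> rcases mem_insert.1 hv with rfl | hvA
  · exact G.irrefl
  · exact hx v hvA
  · exact fun h => hx u huA h.symm
  · exact hA u huA v hvA

lemma K1rFree.card_lt {r : ℕ} (hG : K1rFree G r) {u : V} {A : Finset V}
    (hAu : ∀ a ∈ A, G.Adj u a) (hA : IsIndepFinset G A) : #A < r := by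
  by_contra! hrA
  obtain ⟨B, hBA, hB⟩ := exists_subset_card_eq hrA
  exact hG ⟨u, B, fun a ha => hAu a (hBA ha), fun a ha b hb _ => hA a (hBA ha) b (hBA hb), hB⟩

variable [DecidableRel G.Adj] {k : ℕ}

lemma IsKIndepFinset.mono {S T : Finset V} (hS : IsKIndepFinset G k S) (hTS : T ⊆ S) :
    IsKIndepFinset G k T :=
  fun v hv => (card_le_card (filter_subset_filter _ hTS)).trans (hS v (hTS hv))

lemma IsKIndepFinset.exists_isIndepFinset [DecidableEq V] {X : Finset V}
    (hX : IsKIndepFinset G k X) : ∃ A ⊆ X, IsIndepFinset G A ∧ #X ≤ (k + 1) * #A := by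
  induction X using Finset.strongInduction with
  | H X ih =>
  obtain rfl | ⟨x, hx⟩ := X.eq_empty_or_nonempty
  · exact ⟨∅, empty_subset _, fun _ h => absurd h (notMem_empty _), by simp⟩
  set N := insert x (X.filter (G.Adj x ·))
  have hNX : N ⊆ X := insert_subset hx (filter_subset _ _)
  have hN : #N ≤ k + 1 := (card_insert_le _ _).trans (Nat.succ_le_succ (hX x hx))
  obtain ⟨A, hAX, hA, hXA⟩ :=
    ih (X \ N) (sdiff_ssubset hNX (insert_nonempty _ _)) (IsKIndepFinset.mono hX sdiff_subset)
  have hAN : ∀ a ∈ A, a ∉ N := fun a ha => (mem_sdiff.1 (hAX ha)).2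
  have hxA : x ∉ A := fun hx' => hAN x hx' (mem_insert_self _ _)
  refine ⟨insert x A, insert_subset hx (hAX.trans sdiff_subset), hA.insert fun a ha hxa =>
    hAN a ha (mem_insert_of_mem (mem_filter.2 ⟨(mem_sdiff.1 (hAX ha)).1, hxa⟩)), ?_⟩
  calc #X = #(X \ N) + #N := (card_sdiff_add_card_eq_card hNX).symm
    _ ≤ (k + 1) * #A + (k + 1) := add_le_add hXA hN
    _ = (k + 1) * #(insert x A) := by rw [card_insert_of_notMem hxA]; ring

lemma K1rFree.card_filter_adj_le [DecidableEq V] {r : ℕ} (hG : K1rFree G r) {S : Finset V}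
    (hS : IsKIndepFinset G k S) (u : V) : #(S.filter (G.Adj u ·)) ≤ (r - 1) * (k + 1) := by
  obtain ⟨A, hAS, hA, hcard⟩ :=
    (IsKIndepFinset.mono hS (filter_subset (G.Adj u ·) S)).exists_isIndepFinset
  have hAr : #A ≤ r - 1 :=
    Nat.le_sub_one_of_lt (hG.card_lt (fun a ha => (mem_filter.1 (hAS ha)).2) hA)
  calc #(S.filter (G.Adj u ·)) ≤ (k + 1) * #A := hcard
    _ ≤ (k + 1) * (r - 1) := Nat.mul_le_mul_left _ hAr
    _ = (r - 1) * (k + 1) := Nat.mul_comm _ _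

lemma IsKIndepFinset.degree_le [Fintype V] [DecidableEq V] {S : Finset V}
    (hS : IsKIndepFinset G k S) {v : V} (hv : v ∈ S) :
    G.degree v ≤ k + #(Sᶜ.filter (G.Adj v ·)) := by
  rw [← card_neighborFinset_eq_degree, neighborFinset_eq_filter, ← union_compl S,
    filter_union, card_union_of_disjoint (disjoint_filter_filter disjoint_compl_right)]
  exact Nat.add_le_add_right (hS v hv) _

lemma exists_isKIndepFinset_card_eq_kIndepNum [Fintype V] (k : ℕ) :
    ∃ S : Finset V, IsKIndepFinset G k S ∧ #S = kIndepNum G k :=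
  Nat.sSup_mem (s := {n | ∃ S : Finset V, IsKIndepFinset G k S ∧ #S = n})
    ⟨0, ∅, fun _ h => absurd h (notMem_empty _), rfl⟩
    ⟨Fintype.card V, by rintro _ ⟨S, -, rfl⟩; exact card_le_univ S⟩

end

theorem stmt17_general [Fintype V] (G : SimpleGraph V) [DecidableRel G.Adj]
    (k r : ℕ) (hG : K1rFree G r) :
    kIndepNum G k * (G.minDegree - k + (r - 1) * (k + 1)) ≤
      (r - 1) * (k + 1) * Fintype.card V := by
  classical
  obtain ⟨S, hS, hSk⟩ := exists_isKIndepFinset_card_eq_kIndepNum (G := G) k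
  have hcount : #S * (G.minDegree - k) ≤ #Sᶜ * ((r - 1) * (k + 1)) :=
    card_mul_le_card_mul G.Adj
      (fun v hv => Nat.sub_le_iff_le_add'.2 ((G.minDegree_le_degree v).trans (hS.degree_le hv)))
      (fun u _ => by simpa only [bipartiteBelow, G.adj_comm] using hG.card_filter_adj_le hS u)
  rw [card_compl] at hcount
  rw [← hSk]
  calc #S * (G.minDegree - k + (r - 1) * (k + 1))
      = #S * (G.minDegree - k) + #S * ((r - 1) * (k + 1)) := Nat.mul_add _ _ _
    _ ≤ (Fintype.card V - #S) * ((r - 1) * (k + 1)) + #S * ((r - 1) * (k + 1)) :=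
        Nat.add_le_add_right hcount _
    _ = (r - 1) * (k + 1) * Fintype.card V := by
        rw [← Nat.add_mul, Nat.sub_add_cancel (card_le_univ S), Nat.mul_comm]

/-- For k ≥ 0, r ≥ 3, a K_{1,r}-free graph of order n with minimum degree
δ ≥ k+1 satisfies α_k(G)·(δ - k + (r-1)(k+1)) ≤ (r-1)(k+1)·n. -/
theorem stmt17 [Fintype V] [Nonempty V] (G : SimpleGraph V) [DecidableRel G.Adj]
    (k r : ℕ) (hr : 3 ≤ r) (hG : K1rFree G r) (hδ : k + 1 ≤ G.minDegree) :
    kIndepNum G k * (G.minDegree - k + (r - 1) * (k + 1)) ≤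
      (r - 1) * (k + 1) * Fintype.card V :=
  stmt17_general G k r hG
end
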